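/- arXiv:1302.0048 — 2 statements merged into one kernel-verified Lean document; each statement's English description precedes it below -/
import Mathlib

section
/- Let $\kk$ be a field, let $n, d, \ell$ be natural numbers, let $L$ be an $\ell \times n$ matrix with entries in $\kk$, and let $p, q \in \kk^n$ with $q_i \neq 0$ for all $i$. Let $T : \kk^n \times \kk^n \to \kk^\ell$ be the linear map $T(y, \eta) = L(q)\,y + L(p)\,\eta$, where $L(p)$ (respectively $L(q)$) denotes the matrix obtained from $L$ by multiplying its $i$-th column by $p_i$ (respectively $q_i$). Then $\ker T + (\kk^n \times \{0\}) = \kk^n \times \kk^n$; equivalently, the projection of $\ker T$ onto the second factor $\kk^n$ is surjective. -/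
/-! The sum `ker (f.coprod g) + (M × 0)` is everything as soon as `range g ≤ range f`: any `(y, η)`
splits as `(-x, η) + (y + x, 0)` with `f x = g η`. For `f = L(q)`, `g = L(p)` the range inclusion
holds because `L(p) = L(q) · diag(p / q)` when every `qᵢ` is nonzero. -/

theorem LinearMap.ker_coprod_sup_fst_eq_top {R M N P : Type*} [Ring R] [AddCommGroup M]
    [AddCommGroup N] [AddCommGroup P] [Module R M] [Module R N] [Module R P]
    (f : M →ₗ[R] P) (g : N →ₗ[R] P) (h : range g ≤ range f) :
    ker (f.coprod g) ⊔ Submodule.fst R M N = ⊤ := by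
  refine eq_top_iff.2 fun ⟨y, η⟩ _ => ?_
  obtain ⟨x, hx⟩ := h ⟨η, rfl⟩
  have hker : ((-x, η) : M × N) ∈ ker (f.coprod g) := by simp [hx]
  have hfst : ((y + x, 0) : M × N) ∈ Submodule.fst R M N := rfl
  simpa using Submodule.add_mem_sup hker hfst

theorem Matrix.range_toLin'_mul_diagonal_le {R m n : Type*} [CommSemiring R] [Fintype n]
    [DecidableEq n] (A : Matrix m n R) {p q : n → R} (hpq : ∀ i, q i ∣ p i) :
    LinearMap.range (toLin' (A * diagonal p)) ≤ LinearMap.range (toLin' (A * diagonal q)) := by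
  choose c hc using hpq
  have hfactor : A * diagonal p = A * diagonal q * diagonal c := by
    rw [Matrix.mul_assoc, diagonal_mul_diagonal]
    exact congrArg _ (congrArg _ (funext hc))
  rw [hfactor, toLin'_mul]
  exact LinearMap.range_comp_le_range _ _

/-- Let `k` be a field, `L` an `ℓ × n` matrix over `k`, and
`p q : kⁿ` with all coordinates of `q` nonzero.  Let `T : kⁿ × kⁿ → k^ℓ` be the
linear map `T (y, η) = L(q) y + L(p) η`, where `L(p)` (resp. `L(q)`) is the
matrix obtained from `L` by scaling its `i`-th column by `pᵢ` (resp. `qᵢ`),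
i.e. `L(p) = L * diagonal p`.  Then `ker T + (kⁿ × {0}) = kⁿ × kⁿ`. -/
theorem ker_plus_fst_eq_top (k : Type*) [Field k] (n ℓ : ℕ)
    (L : Matrix (Fin ℓ) (Fin n) k) (p q : Fin n → k) (hq : ∀ i, q i ≠ 0) :
    LinearMap.ker ((Matrix.toLin' (L * Matrix.diagonal q)).coprod
        (Matrix.toLin' (L * Matrix.diagonal p))) ⊔
      Submodule.fst k (Fin n → k) (Fin n → k) = ⊤ :=
  LinearMap.ker_coprod_sup_fst_eq_top _ _ <|
    L.range_toLin'_mul_diagonal_le fun i => (hq i).isUnit.dvd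
end

section
/- Let $\kk$ be a field and $A$ a $d \times n$ integer matrix. Let $\hat{A}$ be the $(d+1) \times (n+1)$ integer matrix obtained from $A$ by adding a row of $1$'s across the top and then adding the column $(1, 0, \dots, 0)^T$ as the leftmost column. Then there is a $\kk$-algebra isomorphism $\kk[\xi_1, \dots, \xi_n]/\operatorname{in}(I_A) \cong \kk[\xi_0, \xi_1, \dots, \xi_n]/(I_{\hat{A}} + \langle \xi_0 \rangle)$, where $\operatorname{in}(I_A)$ is the initial ideal of $I_A$ with respect to total degree. -/
open MvPolynomial

/-- The toric ideal of an integer matrix `A`, generated by the binomials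
`ξ^u - ξ^v` over pairs of exponent vectors `u, v` with `Au = Av`. -/
noncomputable def toricIdeal (k : Type*) [Field k] {d n : ℕ}
    (A : Matrix (Fin d) (Fin n) ℤ) {σ : Type*} (ξvar : Fin n → σ) :
    Ideal (MvPolynomial σ k) :=
  Ideal.span { f | ∃ u v : Fin n → ℕ,
    A.mulVec (fun j => (u j : ℤ)) = A.mulVec (fun j => (v j : ℤ)) ∧
    f = (∏ j, X (ξvar j) ^ u j) - ∏ j, X (ξvar j) ^ v j }

/-- The initial ideal of an ideal `I` of a polynomial ring with respect to the
standard total-degree filtration: the ideal generated by the top-degree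
homogeneous components of all elements of `I`. -/
noncomputable def initialIdeal {k : Type*} [Field k] {σ : Type*}
    (I : Ideal (MvPolynomial σ k)) : Ideal (MvPolynomial σ k) :=
  Ideal.span { g | ∃ f ∈ I, g = homogeneousComponent f.totalDegree f }

/-- The homogenization `Â` of `A`: a row of `1`s is added across the top of
`A`, and then the column `(1,0,…,0)ᵀ` is added as the leftmost column. -/
def matrixHat {d n : ℕ} (A : Matrix (Fin d) (Fin n) ℤ) :
    Matrix (Fin (d + 1)) (Fin (n + 1)) ℤ :=
  Matrix.of (Fin.cons (fun _ => 1) (fun i => Fin.cons 0 (fun j => A i j)))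

/-!
Setting `ξ₀ = 0` maps `k[ξ₀, …, ξₙ]` onto `k[ξ₁, …, ξₙ]` with kernel `⟨ξ₀⟩`, so it suffices that
it carries `I_Â` onto `in(I_A)`. A binomial `ξ^u - ξ^v` of `I_Â` is homogeneous of some degree `D`
(the top row of `Â` consists of ones), and its image is the degree-`D` component of the binomial
`ξ^{tail u} - ξ^{tail v} ∈ I_A`, hence lies in `in(I_A)`. Conversely the top-degree component of
`f ∈ I_A` is the image of the homogenization of `f`, which lies in `I_Â`.

Toric ideals are handled as kernels: `I_B` is the kernel of the map `k[ℕⁿ] → k[ℤᵈ]`, `ξ^u ↦ t^{Bu}`.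
-/

namespace Finsupp

lemma degree_cons {M : Type*} [AddCommMonoid M] {n : ℕ} (a : M) (s : Fin n →₀ M) :
    (cons a s).degree = a + s.degree := by
  simp only [degree_eq_sum, Fin.sum_univ_succ, cons_zero, cons_succ]

end Finsupp

namespace MvPolynomial

section MapDomain
variable {σ R N : Type*} [CommRing R] [AddMonoid N]

lemma coeff_mapDomainRingHom_apply [DecidableEq N] (w : (σ →₀ ℕ) →+ N)
    (f : MvPolynomial σ R) (u : σ →₀ ℕ) :
    (AddMonoidAlgebra.mapDomainRingHom R w f).coeff (w u) =
      ∑ v ∈ f.support with w v = w u, coeff v f := by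
  rw [AddMonoidAlgebra.mapDomainRingHom_apply, AddMonoidAlgebra.coeff_mapDomain,
    Finsupp.mapDomain_apply_eq_sum]
  rfl

lemma mapDomainRingHom_monomial (w : (σ →₀ ℕ) →+ N) (u : σ →₀ ℕ) (c : R) :
    AddMonoidAlgebra.mapDomainRingHom R w (monomial u c) = AddMonoidAlgebra.single (w u) c := by
  rw [← single_eq_monomial, AddMonoidAlgebra.mapDomainRingHom_apply,
    AddMonoidAlgebra.mapDomain_single]

theorem ker_mapDomainRingHom (w : (σ →₀ ℕ) →+ N) :
    RingHom.ker (AddMonoidAlgebra.mapDomainRingHom R w : MvPolynomial σ R →+* _) =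
      Ideal.span {f | ∃ u v, w u = w v ∧ f = monomial u 1 - monomial v 1} := by
  classical
  refine le_antisymm (fun (f : MvPolynomial σ R) hf => ?_) (Ideal.span_le.2 ?_)
  · -- Compare every exponent `v` with a fixed representative `r (w v)` of its fibre: the
    -- representatives carry the fibre sums of the coefficients of `f`, which vanish.
    set r := Function.invFun w
    have hr (u : σ →₀ ℕ) : w (r (w u)) = w u := Function.invFun_eq ⟨u, rfl⟩
    have hrep : ∑ v ∈ f.support, monomial (r (w v)) (coeff v f) = 0 := calc
      _ = ∑ _ ∈ f.support.image w, (0 : MvPolynomial σ R) := by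
        refine (Finset.sum_image' _ fun u _ => ?_).symm
        rw [Finset.sum_congr rfl fun v hv => by rw [(Finset.mem_filter.1 hv).2], ← map_sum,
          ← coeff_mapDomainRingHom_apply w f u, RingHom.mem_ker.1 hf,
          AddMonoidAlgebra.coeff_zero, Finsupp.coe_zero, Pi.zero_apply, map_zero]
      _ = 0 := Finset.sum_const_zero
    have hf_eq : f = ∑ v ∈ f.support, C (coeff v f) * (monomial v 1 - monomial (r (w v)) 1) := by
      simp_rw [mul_sub, C_mul_monomial, mul_one, Finset.sum_sub_distrib, hrep, sub_zero]
      exact as_sum f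
    rw [hf_eq]
    exact Ideal.sum_mem _ fun v _ =>
      Ideal.mul_mem_left _ _ (Ideal.subset_span ⟨v, _, (hr v).symm, rfl⟩)
  · rintro _ ⟨u, v, huv, rfl⟩
    rw [SetLike.mem_coe, RingHom.mem_ker, map_sub, mapDomainRingHom_monomial,
      mapDomainRingHom_monomial, huv, sub_self]

lemma sum_monomial_mem_ker_mapDomainRingHom {σ' N' : Type*} [AddMonoid N'] {w : (σ →₀ ℕ) →+ N}
    {f : MvPolynomial σ R} (hf : f ∈ RingHom.ker (AddMonoidAlgebra.mapDomainRingHom R w))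
    (w' : (σ' →₀ ℕ) →+ N') (h : (σ →₀ ℕ) → σ' →₀ ℕ) (g : N → N')
    (hg : ∀ s ∈ f.support, w' (h s) = g (w s)) :
    ∑ s ∈ f.support, monomial (h s) (coeff s f) ∈
      RingHom.ker (AddMonoidAlgebra.mapDomainRingHom R w') := by
  rw [RingHom.mem_ker, ← AddMonoidAlgebra.coeff_eq_zero]
  calc _ = ∑ s ∈ f.support, Finsupp.single (g (w s)) (coeff s f) := by
        simp only [map_sum, mapDomainRingHom_monomial, AddMonoidAlgebra.coeff_sum,
          AddMonoidAlgebra.coeff_single]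
        exact Finset.sum_congr rfl fun s hs => by rw [hg s hs]
    _ = Finsupp.mapDomain g (AddMonoidAlgebra.mapDomainRingHom R w f).coeff := by
        conv_rhs => rw [as_sum f]
        simp only [map_sum, mapDomainRingHom_monomial, AddMonoidAlgebra.coeff_sum,
          AddMonoidAlgebra.coeff_single, Finsupp.mapDomain_finsetSum, Finsupp.mapDomain_single]
    _ = 0 := by rw [RingHom.mem_ker.1 hf, AddMonoidAlgebra.coeff_zero, Finsupp.mapDomain_zero]

end MapDomain

lemma prod_univ_X_pow_eq_monomial {σ R : Type*} [CommSemiring R] [Fintype σ] (u : σ → ℕ) :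
    ∏ j, (X j : MvPolynomial σ R) ^ u j = monomial (Finsupp.equivFunOnFinite.symm u) 1 := by
  rw [monomial_eq, C_1, one_mul, Finsupp.prod_fintype _ _ fun _ => pow_zero _]
  rfl

lemma homogeneousComponent_monomial {σ R : Type*} [CommSemiring R] (D : ℕ) (s : σ →₀ ℕ) (c : R) :
    homogeneousComponent D (monomial s c) = if s.degree = D then monomial s c else 0 := by
  rw [homogeneousComponent_of_mem (isHomogeneous_monomial c rfl)]
  simp_rw [eq_comm]

section EvalFirstVarZero
variable (R : Type*) [CommSemiring R] (n : ℕ)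

noncomputable def evalFirstVarZero : MvPolynomial (Fin (n + 1)) R →ₐ[R] MvPolynomial (Fin n) R :=
  ((Polynomial.aeval 0).restrictScalars R).comp (finSuccEquiv R n).toAlgHom

variable {R n}

lemma evalFirstVarZero_apply (f : MvPolynomial (Fin (n + 1)) R) :
    evalFirstVarZero R n f = (finSuccEquiv R n f).coeff 0 := by
  rw [Polynomial.coeff_zero_eq_aeval_zero]
  rfl

lemma coeff_evalFirstVarZero (f : MvPolynomial (Fin (n + 1)) R) (s : Fin n →₀ ℕ) :
    coeff s (evalFirstVarZero R n f) = coeff (Finsupp.cons 0 s) f := by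
  rw [evalFirstVarZero_apply, finSuccEquiv_coeff_coeff]

lemma evalFirstVarZero_monomial (u : Fin (n + 1) →₀ ℕ) (c : R) :
    evalFirstVarZero R n (monomial u c) = if u 0 = 0 then monomial u.tail c else 0 := by
  obtain ⟨a, s, rfl⟩ : ∃ a s, u = Finsupp.cons a s := ⟨_, _, (Finsupp.cons_tail u).symm⟩
  ext t
  simp only [coeff_evalFirstVarZero, coeff_monomial, Finsupp.cons_injective2.eq_iff,
    Finsupp.cons_zero, Finsupp.tail_cons]
  split_ifs <;> simp_all [coeff_monomial]

lemma evalFirstVarZero_surjective : Function.Surjective (evalFirstVarZero R n) :=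
  fun p => ⟨(finSuccEquiv R n).symm (Polynomial.C p), by
    rw [evalFirstVarZero_apply, AlgEquiv.apply_symm_apply, Polynomial.coeff_C_zero]⟩

lemma ker_evalFirstVarZero {R : Type*} [CommRing R] :
    RingHom.ker (evalFirstVarZero R n) = Ideal.span {X 0} := by
  ext f
  rw [RingHom.mem_ker, Ideal.mem_span_singleton, evalFirstVarZero_apply, ← Polynomial.X_dvd_iff,
    ← finSuccEquiv_X_zero, map_dvd_iff]

/-- `ξ₀ ^ D f(ξ₁/ξ₀, …, ξₙ/ξ₀)`; the truncated subtraction makes this the homogenization of `f`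
only when `f.totalDegree ≤ D`. -/
noncomputable def homogenize (D : ℕ) (f : MvPolynomial (Fin n) R) : MvPolynomial (Fin (n + 1)) R :=
  ∑ s ∈ f.support, monomial (Finsupp.cons (D - s.degree) s) (coeff s f)

lemma evalFirstVarZero_homogenize {f : MvPolynomial (Fin n) R} {D : ℕ} (hD : f.totalDegree ≤ D) :
    evalFirstVarZero R n (homogenize D f) = homogeneousComponent D f := by
  rw [homogenize, map_sum, homogeneousComponent_apply, Finset.sum_filter]
  refine Finset.sum_congr rfl fun s hs => ?_
  have hs : s.degree ≤ D := (le_totalDegree hs).trans hD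
  rw [evalFirstVarZero_monomial, Finsupp.cons_zero, Finsupp.tail_cons]
  exact if_congr (by omega) rfl rfl

end EvalFirstVarZero

end MvPolynomial

def Matrix.toricDegree {ι σ : Type*} [Fintype σ] (B : Matrix ι σ ℤ) : (σ →₀ ℕ) →+ (ι → ℤ) where
  toFun u := B.mulVec fun j => (u j : ℤ)
  map_zero' := B.mulVec_zero
  map_add' u v := by
    rw [← Matrix.mulVec_add]
    rfl

lemma toricDegree_matrixHat {d n : ℕ} (A : Matrix (Fin d) (Fin n) ℤ) (u : Fin (n + 1) →₀ ℕ) :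
    (matrixHat A).toricDegree u = Fin.cons (u.degree : ℤ) (A.toricDegree u.tail) := by
  ext i
  cases i using Fin.cases with
  | zero => simp [Matrix.toricDegree, matrixHat, Matrix.mulVec, dotProduct, Finsupp.degree_eq_sum]
  | succ i =>
    simp [Matrix.toricDegree, matrixHat, Matrix.mulVec, dotProduct, Fin.sum_univ_succ,
      Finsupp.tail_apply]

section Toric
variable {k : Type*} [Field k] {d n : ℕ}

theorem toricIdeal_eq_ker (B : Matrix (Fin d) (Fin n) ℤ) :
    toricIdeal k B id = RingHom.ker (AddMonoidAlgebra.mapDomainRingHom k B.toricDegree) := by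
  rw [ker_mapDomainRingHom, toricIdeal]
  congr 1
  ext f
  simp only [id, prod_univ_X_pow_eq_monomial]
  constructor
  · rintro ⟨u, v, huv, rfl⟩
    exact ⟨_, _, by simpa [Matrix.toricDegree] using huv, rfl⟩
  · rintro ⟨u, v, huv, rfl⟩
    exact ⟨u, v, by simpa [Matrix.toricDegree] using huv, by simp⟩

lemma homogeneousComponent_mem_initialIdeal {σ : Type*} {I : Ideal (MvPolynomial σ k)}
    {f : MvPolynomial σ k} (hf : f ∈ I) {D : ℕ} (hD : f.totalDegree ≤ D) :
    homogeneousComponent D f ∈ initialIdeal I := by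
  rcases hD.lt_or_eq with hlt | rfl
  · rw [homogeneousComponent_eq_zero _ _ hlt]
    exact zero_mem _
  · exact Ideal.subset_span ⟨f, hf, rfl⟩

lemma homogenize_mem_toricIdeal_matrixHat (A : Matrix (Fin d) (Fin n) ℤ)
    {f : MvPolynomial (Fin n) k} (hf : f ∈ toricIdeal k A id) {D : ℕ} (hD : f.totalDegree ≤ D) :
    homogenize D f ∈ toricIdeal k (matrixHat A) id := by
  rw [toricIdeal_eq_ker] at hf ⊢
  refine sum_monomial_mem_ker_mapDomainRingHom hf _ _ (@Fin.cons d (fun _ => ℤ) D) fun s hs => ?_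
  have hs : s.degree ≤ D := (le_totalDegree hs).trans hD
  rw [toricDegree_matrixHat, Finsupp.degree_cons, Finsupp.tail_cons, Nat.sub_add_cancel hs]

lemma evalFirstVarZero_binomial_mem_initialIdeal (A : Matrix (Fin d) (Fin n) ℤ)
    {u v : Fin (n + 1) →₀ ℕ} (huv : (matrixHat A).toricDegree u = (matrixHat A).toricDegree v) :
    evalFirstVarZero k n (monomial u 1 - monomial v 1) ∈ initialIdeal (toricIdeal k A id) := by
  rw [toricDegree_matrixHat, toricDegree_matrixHat, Fin.cons_inj, Nat.cast_inj] at huv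
  obtain ⟨hdeg, htail⟩ := huv
  have hmem : monomial u.tail 1 - monomial v.tail 1 ∈ toricIdeal k A id := by
    rw [toricIdeal_eq_ker, ker_mapDomainRingHom]
    exact Ideal.subset_span ⟨_, _, htail, rfl⟩
  have hu := Finsupp.degree_cons (u 0) u.tail
  have hv := Finsupp.degree_cons (v 0) v.tail
  rw [Finsupp.cons_tail] at hu hv
  convert homogeneousComponent_mem_initialIdeal hmem (D := u.degree) ?_ using 1
  · rw [map_sub, map_sub, evalFirstVarZero_monomial, evalFirstVarZero_monomial,
      homogeneousComponent_monomial, homogeneousComponent_monomial]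
    congr 1 <;> exact if_congr (by omega) rfl rfl
  · refine (totalDegree_sub _ _).trans (max_le ?_ ?_) <;>
      refine (totalDegree_monomial_le _ _).trans ?_
    · change u.tail.degree ≤ u.degree
      omega
    · change v.tail.degree ≤ u.degree
      omega

theorem map_evalFirstVarZero_toricIdeal_matrixHat (A : Matrix (Fin d) (Fin n) ℤ) :
    (toricIdeal k (matrixHat A) id).map (evalFirstVarZero k n) =
      initialIdeal (toricIdeal k A id) := by
  refine le_antisymm ?_ (Ideal.span_le.2 ?_)
  · rw [Ideal.map_le_iff_le_comap, toricIdeal_eq_ker (matrixHat A), ker_mapDomainRingHom,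
      Ideal.span_le]
    rintro _ ⟨u, v, huv, rfl⟩
    exact evalFirstVarZero_binomial_mem_initialIdeal A huv
  · rintro _ ⟨f, hf, rfl⟩
    rw [← evalFirstVarZero_homogenize le_rfl]
    exact Ideal.mem_map_of_mem _ (homogenize_mem_toricIdeal_matrixHat A hf le_rfl)

end Toric

/-- There is a `k`-algebra isomorphism
`k[ξ₁,…,ξₙ]/in(I_A) ≅ k[ξ₀,ξ₁,…,ξₙ]/(I_Â + ⟨ξ₀⟩)`, where `in(I_A)` is the
initial ideal of `I_A` with respect to total degree and `Â` is the
homogenization of `A`. -/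
theorem initial_ideal_quotient_iso_homogenized
    (k : Type*) [Field k] (d n : ℕ) (A : Matrix (Fin d) (Fin n) ℤ) :
    Nonempty
      ((MvPolynomial (Fin n) k ⧸ initialIdeal (toricIdeal k A (id : Fin n → Fin n)))
        ≃ₐ[k]
      (MvPolynomial (Fin (n + 1)) k ⧸
        (toricIdeal k (matrixHat A) (id : Fin (n + 1) → Fin (n + 1)) +
          Ideal.span {X (0 : Fin (n + 1))}))) := by
  set φ := evalFirstVarZero k n
  set ψ := (Ideal.Quotient.mkₐ k (initialIdeal (toricIdeal k A id))).comp φ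
  have hψ : Function.Surjective ψ :=
    (Ideal.Quotient.mkₐ_surjective k _).comp evalFirstVarZero_surjective
  have hker : RingHom.ker ψ = toricIdeal k (matrixHat A) id + Ideal.span {X 0} := calc
    _ = (initialIdeal (toricIdeal k A id)).comap φ :=
      Ideal.ext fun _ => Ideal.Quotient.eq_zero_iff_mem
    _ = ((toricIdeal k (matrixHat A) id).map φ).comap φ := by
      rw [map_evalFirstVarZero_toricIdeal_matrixHat]
    _ = _ := by
      rw [Ideal.comap_map_of_surjective' φ evalFirstVarZero_surjective, ker_evalFirstVarZero]
      rfl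
  exact ⟨(Ideal.quotientKerAlgEquivOfSurjective hψ).symm.trans (Ideal.quotientEquivAlgOfEq k hker)⟩
end
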